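/- Let f, G : ℝ → ℝ be continuously differentiable and let t ≥ 0 be such that G(t) < 1. Then the limit as T → t from the right of (1/(T − t))·[ f(T)·(1 − G(T))/(1 − G(t)) + (1/(1 − G(t)))·∫_t^T f(T − u) G'(u) du − f(t) ] exists and equals f'(t) + (G'(t)/(1 − G(t)))·(f(0) − f(t)). -/

import Mathlib

/-!
Write `A T = f T (1 - G T) / (1 - G t)`, so that `A t = f t` and the quotient splits as the slope
of `A` at `t` plus `1 / (1 - G t)` times the average over `[t, T]` of `u ↦ f (T - u) G' u`.
The slope tends to `A' t = (f' t (1 - G t) - f t G' t) / (1 - G t)` and, by joint continuity of the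
integrand in `(T, u)`, the average tends to its value `f 0 G' t` at `T = u = t`.
-/

open MeasureTheory Filter Topology Set

theorem tendsto_inv_smul_intervalIntegral_nhdsGT {E : Type*} [NormedAddCommGroup E]
    [NormedSpace ℝ E] [CompleteSpace E] {F : ℝ → ℝ → E} {t : ℝ}
    (hF : ContinuousAt (Function.uncurry F) (t, t))
    (hint : ∀ᶠ T in 𝓝[>] t, IntervalIntegrable (F T) volume t T) :
    Tendsto (fun T => (T - t)⁻¹ • ∫ u in t..T, F T u) (𝓝[>] t) (𝓝 (F t t)) := by
  rw [Metric.tendsto_nhds]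
  intro ε hε
  obtain ⟨δ, hδ, hball⟩ :=
    Metric.eventually_nhds_iff.mp (Metric.tendsto_nhds.mp hF (ε / 2) (half_pos hε))
  filter_upwards [hint, Ioo_mem_nhdsGT (lt_add_of_pos_right t hδ)] with T hT_int ⟨htT, hTδ⟩
  have hpos : 0 < T - t := sub_pos.mpr htT
  have hbound : ∀ u ∈ uIoc t T, ‖F T u - F t t‖ ≤ ε / 2 := by
    intro u hu
    rw [uIoc_of_le htT.le] at hu
    have hdist : dist (T, u) (t, t) < δ := by
      rw [Prod.dist_eq, Real.dist_eq, Real.dist_eq, abs_of_pos hpos,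
        abs_of_pos (sub_pos.mpr hu.1)]
      exact max_lt (by linarith) (by linarith [hu.2])
    exact (dist_eq_norm (F T u) (F t t) ▸ hball hdist).le
  have herror : ‖(∫ u in t..T, F T u) - (T - t) • F t t‖ ≤ ε / 2 * (T - t) := by
    rw [← intervalIntegral.integral_const, ← intervalIntegral.integral_sub hT_int
      intervalIntegrable_const, ← abs_of_pos hpos]
    exact intervalIntegral.norm_integral_le_of_norm_le_const hbound
  calc dist ((T - t)⁻¹ • ∫ u in t..T, F T u) (F t t)
      = ‖(T - t)⁻¹ • ((∫ u in t..T, F T u) - (T - t) • F t t)‖ := by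
        rw [dist_eq_norm, smul_sub, inv_smul_smul₀ hpos.ne']
    _ = (T - t)⁻¹ * ‖(∫ u in t..T, F T u) - (T - t) • F t t‖ := by
        rw [norm_smul, Real.norm_of_nonneg (inv_pos.mpr hpos).le]
    _ ≤ (T - t)⁻¹ * (ε / 2 * (T - t)) := by gcongr
    _ = ε / 2 := by field_simp
    _ < ε := half_lt_self hε

theorem backward_recurrence_generator_limit_general
    (f G : ℝ → ℝ) (hf : ContDiff ℝ 1 f) (hG : ContDiff ℝ 1 G)
    (t : ℝ) (hGt : G t < 1) :
    Filter.Tendsto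
      (fun T => (1 / (T - t)) *
        (f T * (1 - G T) / (1 - G t) +
          (1 / (1 - G t)) * (∫ u in t..T, f (T - u) * deriv G u) - f t))
      (nhdsWithin t (Set.Ioi t))
      (nhds (deriv f t + (deriv G t / (1 - G t)) * (f 0 - f t))) := by
  have hc : 1 - G t ≠ 0 := (sub_pos.mpr hGt).ne'
  set A : ℝ → ℝ := fun T => f T * (1 - G T) / (1 - G t)
  have hA : HasDerivAt A ((deriv f t * (1 - G t) + f t * (0 - deriv G t)) / (1 - G t)) t :=
    ((hf.differentiable one_ne_zero t).hasDerivAt.mul ((hasDerivAt_const t 1).sub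
      (hG.differentiable one_ne_zero t).hasDerivAt)).div_const _
  have hintegrand : Continuous (Function.uncurry fun T u => f (T - u) * deriv G u) :=
    (hf.continuous.comp (continuous_fst.sub continuous_snd)).mul
      ((hG.continuous_deriv le_rfl).comp continuous_snd)
  have haverage := tendsto_inv_smul_intervalIntegral_nhdsGT hintegrand.continuousAt
    (Eventually.of_forall fun T =>
      (hintegrand.comp (Continuous.prodMk_right T)).intervalIntegrable t T)
  have hslope := hA.tendsto_slope.mono_left (nhdsGT_le_nhdsNE t)
  convert hslope.add (haverage.const_mul (1 / (1 - G t))) using 1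
  · ext T
    simp only [slope_def_field, A, smul_eq_mul]
    field_simp
    ring
  · rw [sub_self]
    congr 1
    field_simp
    ring

/-- Proposition 1 (generator of the backward recurrence time process): for `f, G`
continuously differentiable and `t ≥ 0` with `G(t) < 1`,
`lim_{T → t⁺} (1/(T-t))·[f(T)(1-G(T))/(1-G(t)) + (1/(1-G(t)))∫_t^T f(T-u)G'(u) du - f(t)]
  = f'(t) + (G'(t)/(1-G(t)))·(f(0) - f(t))`. -/
theorem backward_recurrence_generator_limit
    (f G : ℝ → ℝ) (hf : ContDiff ℝ 1 f) (hG : ContDiff ℝ 1 G)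
    (t : ℝ) (ht : 0 ≤ t) (hGt : G t < 1) :
    Filter.Tendsto
      (fun T => (1 / (T - t)) *
        (f T * (1 - G T) / (1 - G t) +
          (1 / (1 - G t)) * (∫ u in t..T, f (T - u) * deriv G u) - f t))
      (nhdsWithin t (Set.Ioi t))
      (nhds (deriv f t + (deriv G t / (1 - G t)) * (f 0 - f t))) :=
  backward_recurrence_generator_limit_general f G hf hG t hGt
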